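/- arXiv:2402.09085 — 2 statements merged into one kernel-verified Lean document; each statement's English description precedes it below -/
import Mathlib

section
/- If f and g are nonzero univariate rational functions over an infinite field with g(0) defined and g(0) = 1, and f/g is a polynomial p of degree at most d, then p = Σ_{j=0}^{d} H-truncation up to degree d of f·(1−g)^j, where the truncation keeps only monomials of degree ≤ d. More precisely: if B is a polynomial with constant term 1 and A a polynomial such that A = p·B for a polynomial p of degree at most d, then p equals the truncation to degree ≤ d of Σ_{j=0}^{d} A(1−B)^j. -/
/-!
Since `1 - B` has no constant term, `B · Σ_{j ≤ d} (1 - B)^j = 1 - (1 - B)^(d+1)` is `1` modulo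
`X^(d+1)`. Hence `Σ_{j ≤ d} A (1 - B)^j = p - p (1 - B)^(d+1)` agrees with `p` in all degrees `≤ d`,
and truncating to degree `≤ d` recovers `p` because `deg p ≤ d`.
-/

open Polynomial Finset

/-- Truncation of a univariate polynomial keeping only the monomials of degree
at most `d`. -/
noncomputable def truncLe {K : Type*} [Field K] (d : ℕ) (q : Polynomial K) :
    Polynomial K :=
  ∑ i ∈ Finset.range (d + 1), Polynomial.C (q.coeff i) * Polynomial.X ^ i

namespace Polynomial

variable {K : Type*} [Field K]

theorem coeff_truncLe (d i : ℕ) (q : K[X]) :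
    (truncLe d q).coeff i = if i ≤ d then q.coeff i else 0 := by
  simp only [truncLe, finsetSum_coeff, coeff_C_mul_X_pow, sum_ite_eq, mem_range,
    Nat.lt_succ_iff]

theorem truncLe_eq_self {d : ℕ} {q : K[X]} (hq : q.degree ≤ d) : truncLe d q = q := by
  ext i
  rw [coeff_truncLe]
  split_ifs with hi
  · rfl
  · exact (coeff_eq_zero_of_degree_lt (hq.trans_lt (by exact_mod_cast not_le.mp hi))).symm

theorem truncLe_sub_of_X_pow_dvd {d : ℕ} (q : K[X]) {r : K[X]} (hr : X ^ (d + 1) ∣ r) :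
    truncLe d (q - r) = truncLe d q := by
  ext i
  simp only [coeff_truncLe, coeff_sub]
  split_ifs with hi
  · rw [X_pow_dvd_iff.mp hr i (Nat.lt_succ_of_le hi), sub_zero]
  · rfl

theorem X_dvd_one_sub_of_coeff_zero_eq_one {R : Type*} [CommRing R] {B : R[X]}
    (hB : B.coeff 0 = 1) : X ∣ 1 - B := by
  simp [X_dvd_iff, hB]

end Polynomial

theorem mul_geom_sum_one_sub {R : Type*} [CommRing R] (B : R) (n : ℕ) :
    B * ∑ j ∈ range n, (1 - B) ^ j = 1 - (1 - B) ^ n := by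
  simpa using mul_neg_geom_sum (1 - B) n

theorem division_elimination_truncation_general {K : Type*} [Field K]
    (d : ℕ) (A B p : Polynomial K)
    (hB : B.coeff 0 = 1) (hA : A = p * B) (hp : p.degree ≤ d) :
    p = truncLe d (∑ j ∈ Finset.range (d + 1), A * (1 - B) ^ j) := by
  have hsum : ∑ j ∈ range (d + 1), A * (1 - B) ^ j = p - p * (1 - B) ^ (d + 1) := by
    rw [← mul_sum, hA, mul_assoc, mul_geom_sum_one_sub, mul_sub, mul_one]
  have hdvd : X ^ (d + 1) ∣ p * (1 - B) ^ (d + 1) :=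
    (pow_dvd_pow_of_dvd (X_dvd_one_sub_of_coeff_zero_eq_one hB) _).mul_left p
  rw [hsum, truncLe_sub_of_X_pow_dvd p hdvd, truncLe_eq_self hp]

/-- over an infinite field, if `B` is a polynomial with constant
term `1` and `A = p·B` for a polynomial `p` of degree at most `d`, then `p`
equals the truncation to degree `≤ d` of `Σ_{j=0}^{d} A·(1−B)^j`. -/
theorem division_elimination_truncation {K : Type*} [Field K] [Infinite K]
    (d : ℕ) (A B p : Polynomial K)
    (hB : B.coeff 0 = 1) (hA : A = p * B) (hp : p.degree ≤ d) :
    p = truncLe d (∑ j ∈ Finset.range (d + 1), A * (1 - B) ^ j) :=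
  division_elimination_truncation_general d A B p hB hA hp
end

section
/- Let M ∈ {0,1}^{n×n} and suppose column t has entries M_{a,t} = M_{b,t} = 1 with a ≠ b. Define the (n+1)×(n+1) matrix M' by: M'_{i,j} = M_{i,j} for i,j ≤ n except M'_{a,t} = M'_{b,t} = 0; M'_{n+1,t} = 1, M'_{n+1,n+1} = 1, M'_{a,n+1} = M'_{b,n+1} = 1, and all other entries of the new row and column are 0. Then per M' = per M. -/
open Finset

/-- The permanent of a square matrix. -/
noncomputable def perm {ι : Type*} [Fintype ι] [DecidableEq ι]
    (M : Matrix ι ι ℝ) : ℝ :=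
  ∑ σ : Equiv.Perm ι, ∏ i, M i (σ i)

lemma perm_submatrix {ι κ : Type*} [Fintype ι] [DecidableEq ι] [Fintype κ] [DecidableEq κ]
    (e : κ ≃ ι) (M : Matrix ι ι ℝ) : perm (M.submatrix e e) = perm M := by
  unfold perm
  apply Fintype.sum_equiv (Equiv.permCongr e)
  intro σ
  apply Fintype.prod_equiv e
  intro i
  simp [Matrix.submatrix_apply, Equiv.permCongr_apply]

/-- the sparsifying operation preserves the permanent. Given a
`{0,1}` matrix `M` with `M a t = M b t = 1`, `a ≠ b`, the `(n+1)×(n+1)` matrix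
`M'` (indexed by `Fin n ⊕ Unit`, the extra index being the new row/column)
obtained by zeroing the entries `(a,t)` and `(b,t)`, putting `1` at the new
diagonal entry, at entry `(new, t)` of the new row and at entries `(a, new)`,
`(b, new)` of the new column, and `0` elsewhere in the new row and column,
satisfies `per M' = per M`. -/
theorem sparsify_preserves_permanent (n : ℕ) (M : Matrix (Fin n) (Fin n) ℝ)
    (h01 : ∀ i j, M i j = 0 ∨ M i j = 1)
    (a b t : Fin n) (hab : a ≠ b) (hat : M a t = 1) (hbt : M b t = 1)
    (M' : Matrix (Fin n ⊕ Unit) (Fin n ⊕ Unit) ℝ)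
    (hM' : ∀ i j, M' (Sum.inl i) (Sum.inl j) =
        if j = t ∧ (i = a ∨ i = b) then 0 else M i j)
    (hrow : ∀ j, M' (Sum.inr ()) (Sum.inl j) = if j = t then 1 else 0)
    (hcol : ∀ i, M' (Sum.inl i) (Sum.inr ()) = if i = a ∨ i = b then 1 else 0)
    (hdiag : M' (Sum.inr ()) (Sum.inr ()) = 1) :
    perm M' = perm M := by
  classical
  set E : Option (Fin n) ≃ (Fin n ⊕ Unit) := Equiv.optionEquivSumPUnit (Fin n) with hE
  set N : Matrix (Option (Fin n)) (Option (Fin n)) ℝ := M'.submatrix E E with hN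
  have hNnn : N none none = 1 := hdiag
  have hNnl : ∀ j, N none (some j) = if j = t then 1 else 0 := fun j => hrow j
  have hNln : ∀ i, N (some i) none = if i = a ∨ i = b then 1 else 0 := fun i => hcol i
  have hNll : ∀ i j, N (some i) (some j) =
      if j = t ∧ (i = a ∨ i = b) then 0 else M i j := fun i j => hM' i j
  have key : perm N = perm M' := perm_submatrix E M'
  rw [← key]
  unfold perm
  rw [← Equiv.sum_comp (Equiv.Perm.decomposeOption.symm)
      (fun σ : Equiv.Perm (Option (Fin n)) => ∏ i, N i (σ i))]
  rw [Fintype.sum_prod_type, Fintype.sum_option]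
  have hmid : ∀ j : Fin n, j ∈ (univ : Finset (Fin n)) → j ≠ t →
      (∑ τ : Equiv.Perm (Fin n),
        ∏ i, N i ((Equiv.Perm.decomposeOption.symm (some j, τ)) i)) = 0 := by
    intro j _ hj
    apply Finset.sum_eq_zero
    intro τ _
    apply Finset.prod_eq_zero (Finset.mem_univ (none : Option (Fin n)))
    simp [Equiv.Perm.decomposeOption_symm_apply, hNnl, hj]
  rw [Finset.sum_eq_single_of_mem t (Finset.mem_univ t) hmid]
  rw [← Finset.sum_add_distrib]
  apply Finset.sum_congr rfl
  intro τ _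
  have hA : (∏ i, N i ((Equiv.Perm.decomposeOption.symm ((none : Option (Fin n)), τ)) i)) =
      ∏ i, (if τ i = t ∧ (i = a ∨ i = b) then (0:ℝ) else M i (τ i)) := by
    rw [Fintype.prod_option]
    simp only [Equiv.Perm.decomposeOption_symm_apply, Equiv.Perm.mul_apply,
      Equiv.optionCongr_apply, Option.map_none, Option.map_some, Equiv.swap_self,
      Equiv.refl_apply, hNnn, hNll, one_mul]
  have hB : (∏ i, N i ((Equiv.Perm.decomposeOption.symm (some t, τ)) i)) =
      ∏ i, (if τ i = t then (if i = a ∨ i = b then (1:ℝ) else 0) else M i (τ i)) := by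
    rw [Fintype.prod_option]
    have h1 : N none ((Equiv.Perm.decomposeOption.symm (some t, τ)) none) = 1 := by
      simp [Equiv.Perm.decomposeOption_symm_apply, hNnl]
    rw [h1, one_mul]
    apply Finset.prod_congr rfl
    intro i _
    by_cases h : τ i = t
    · simp [Equiv.Perm.decomposeOption_symm_apply, h, Equiv.swap_apply_right, hNln]
    · have hne : (some (τ i) : Option (Fin n)) ≠ some t := by simpa using h
      simp [Equiv.Perm.decomposeOption_symm_apply, Equiv.swap_apply_of_ne_of_ne
        (Option.some_ne_none (τ i)) hne, hNll, h]
  rw [hA, hB]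
  by_cases ha : τ a = t
  · have hbn : τ b ≠ t := fun h => hab (τ.injective (ha.trans h.symm))
    have h1 : (∏ i, (if τ i = t ∧ (i = a ∨ i = b) then (0:ℝ) else M i (τ i))) = 0 := by
      apply Finset.prod_eq_zero (Finset.mem_univ a)
      simp [ha]
    have h2 : (∏ i, (if τ i = t then (if i = a ∨ i = b then (1:ℝ) else 0) else M i (τ i))) =
        ∏ i, M i (τ i) := by
      apply Finset.prod_congr rfl
      intro i _
      by_cases h : τ i = t
      · have hia : i = a := τ.injective (h.trans ha.symm)
        subst hia
        simp [h, ha, hat]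
      · simp [h]
    rw [h1, h2, zero_add]
  · by_cases hb : τ b = t
    · have h1 : (∏ i, (if τ i = t ∧ (i = a ∨ i = b) then (0:ℝ) else M i (τ i))) = 0 := by
        apply Finset.prod_eq_zero (Finset.mem_univ b)
        simp [hb]
      have h2 : (∏ i, (if τ i = t then (if i = a ∨ i = b then (1:ℝ) else 0) else M i (τ i))) =
          ∏ i, M i (τ i) := by
        apply Finset.prod_congr rfl
        intro i _
        by_cases h : τ i = t
        · have hib : i = b := τ.injective (h.trans hb.symm)
          subst hib
          simp [h, hb, hbt]
        · simp [h]
      rw [h1, h2, zero_add]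
    · have h1 : (∏ i, (if τ i = t ∧ (i = a ∨ i = b) then (0:ℝ) else M i (τ i))) =
          ∏ i, M i (τ i) := by
        apply Finset.prod_congr rfl
        intro i _
        have : ¬(τ i = t ∧ (i = a ∨ i = b)) := by
          rintro ⟨h1, rfl | rfl⟩
          exacts [ha h1, hb h1]
        simp [this]
      have h2 : (∏ i, (if τ i = t then (if i = a ∨ i = b then (1:ℝ) else 0) else M i (τ i))) =
          0 := by
        apply Finset.prod_eq_zero (Finset.mem_univ (τ.symm t))
        have ht' : τ (τ.symm t) = t := τ.apply_symm_apply t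
        have hna : τ.symm t ≠ a := fun h => ha (by rw [← h, ht'])
        have hnb : τ.symm t ≠ b := fun h => hb (by rw [← h, ht'])
        simp [ht', hna, hnb]
      rw [h1, h2, add_zero]
end
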